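/- Let V : ℝ → ℝ be an even polynomial with V(0) = 0 and V'' convex, and let F : ℝ → ℝ be an even polynomial with F(0) = 0 and F'' convex. Assume V''(0) + F''(0) > 0. Then for every ε with 0 < ε ≤ 2(V''(0) + F''(0)) and every probability density u on ℝ with finite moments of all orders satisfying ∫_ℝ x u(x) dx = 0, one has Υ_ε(u) ≥ −ε/4 − 4ε e⁻¹. -/

import Mathlib

/-!
Each term of the free energy is bounded below by a multiple of the second moment
`m₂ = ∫ x² u`. As `V` is even, so is `V''`; being also convex, `V''` is minimal
at `0`. Hence `V - V''(0) x² / 2` is even and convex, thus minimal at `0`, i.e.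
`V x ≥ V''(0) x² / 2`, and likewise `F x ≥ F''(0) x² / 2`; for a centered density the
interaction term is then at least `F''(0) m₂ / 2`. The entropy is controlled by the pointwise
Fenchel inequality `t log t ≥ -a t - exp (-a - 1)` with `a = x² / 2`, which gives
`∫ u log u ≥ -m₂ / 2 - √(2π) / e`. Altogether
`Υ_ε(u) ≥ (V''(0) + F''(0) - ε / 2) m₂ / 2 - ε √(2π) / (2e)`, and the first term is
nonnegative for `ε ≤ 2 (V''(0) + F''(0))`.
-/

open MeasureTheory Real

/-- A probability density on `ℝ`. -/
def IsProbDensity (u : ℝ → ℝ) : Prop :=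
  Measurable u ∧ (∀ x, 0 ≤ u x) ∧ (∫ x : ℝ, u x) = 1

/-- All moments of `u` are finite. -/
def HasAllMoments (u : ℝ → ℝ) : Prop :=
  ∀ N : ℕ, Integrable (fun x : ℝ => |x| ^ N * u x)

/-- The free energy `Υ_ε(u)`. -/
noncomputable def freeEnergy (V F : ℝ → ℝ) (ε : ℝ) (u : ℝ → ℝ) : ℝ :=
  ε / 2 * (∫ x : ℝ, u x * Real.log (u x)) + (∫ x : ℝ, V x * u x)
    + 1 / 2 * (∫ x : ℝ, ∫ y : ℝ, F (x - y) * u x * u y)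

theorem ConvexOn.apply_zero_le_of_even {E : Type*} [AddCommGroup E] [Module ℝ E] {g : E → ℝ}
    (hg : ConvexOn ℝ Set.univ g) (heven : g.Even) (x : E) : g 0 ≤ g x := by
  have h := hg.2 (Set.mem_univ x) (Set.mem_univ (-x)) (by norm_num : (0 : ℝ) ≤ 1 / 2)
    (by norm_num : (0 : ℝ) ≤ 1 / 2) (by norm_num)
  rw [← smul_add, add_neg_cancel, smul_zero, heven x, ← add_smul] at h
  norm_num at h
  exact h

theorem Function.Even.deriv_odd {f : ℝ → ℝ} (hf : f.Even) : (deriv f).Odd := fun x => by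
  have := deriv_comp_neg f x
  rw [funext hf] at this
  linarith

theorem Function.Odd.deriv_even {f : ℝ → ℝ} (hf : f.Odd) : (deriv f).Even := fun x => by
  have := deriv_comp_neg f x
  rw [funext hf, deriv.fun_neg] at this
  linarith

theorem Function.Even.add_mul_sq_le_of_le_deriv_deriv {V : ℝ → ℝ} (hV : Differentiable ℝ V)
    (hV' : Differentiable ℝ (deriv V)) (heven : V.Even) {c : ℝ}
    (hc : ∀ y, c ≤ deriv (deriv V) y) (x : ℝ) : V 0 + c / 2 * x ^ 2 ≤ V x := by
  set W : ℝ → ℝ := fun y => V y - c / 2 * y ^ 2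
  have hW' : deriv W = fun y => deriv V y - c * y := funext fun y =>
    ((hV y).hasDerivAt.sub ((hasDerivAt_pow 2 y).const_mul (c / 2))).deriv.trans (by norm_num; ring)
  have hWconv : ConvexOn ℝ Set.univ W := by
    refine convexOn_univ_of_deriv2_nonneg (by fun_prop) (by rw [hW']; fun_prop) fun y => ?_
    rw [Function.iterate_succ_apply, Function.iterate_one, hW',
      deriv_fun_sub (hV' y) (by fun_prop)]
    simp [hc y]
  have hWeven : W.Even := fun y => by simp only [W, heven y, even_two.neg_pow]
  have := hWconv.apply_zero_le_of_even hWeven x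
  simp only [W] at this
  linarith

theorem Function.Even.add_deriv_deriv_mul_sq_le {V : ℝ → ℝ} (hV : ContDiff ℝ 2 V)
    (heven : V.Even) (hconv : ConvexOn ℝ Set.univ (deriv (deriv V))) (x : ℝ) :
    V 0 + deriv (deriv V) 0 / 2 * x ^ 2 ≤ V x :=
  heven.add_mul_sq_le_of_le_deriv_deriv (hV.differentiable two_ne_zero) hV.differentiable_deriv_two
    (hconv.apply_zero_le_of_even heven.deriv_odd.deriv_even) x

theorem deriv_deriv_zero_mul_sq_le_of_eq_eval {V : ℝ → ℝ} {p : Polynomial ℝ}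
    (hVp : ∀ x, V x = p.eval x) (heven : V.Even) (hV0 : V 0 = 0)
    (hconv : ConvexOn ℝ Set.univ (deriv (deriv V))) (x : ℝ) :
    deriv (deriv V) 0 / 2 * x ^ 2 ≤ V x := by
  have hV : ContDiff ℝ 2 V := by simpa [funext hVp] using p.contDiff_aeval (𝕜 := ℝ) 2
  simpa [hV0] using heven.add_deriv_deriv_mul_sq_le hV hconv x

theorem neg_mul_sub_exp_le_mul_log {t : ℝ} (ht : 0 ≤ t) (a : ℝ) :
    -(a * t) - exp (-a - 1) ≤ t * log t := by
  rcases ht.eq_or_lt with rfl | ht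
  · simpa using (exp_pos _).le
  have hb := exp_pos (-a - 1)
  have key := mul_le_mul_of_nonneg_left (log_le_sub_one_of_pos (div_pos hb ht)) ht.le
  rw [log_div hb.ne' ht.ne', log_exp, mul_sub t (exp (-a - 1) / t),
    mul_div_cancel₀ _ ht.ne'] at key
  linarith

theorem neg_integral_sub_integral_exp_le_integral_mul_log {α : Type*} [MeasurableSpace α]
    {μ : Measure α} {u a : α → ℝ} (hu : ∀ x, 0 ≤ u x) (ha : ∀ x, 0 ≤ a x)
    (hau : Integrable (fun x => a x * u x) μ) (hexp : Integrable (fun x => exp (-a x - 1)) μ) :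
    -(∫ x, a x * u x ∂μ) - ∫ x, exp (-a x - 1) ∂μ ≤ ∫ x, u x * log (u x) ∂μ := by
  have hlow : Integrable (fun x => -(a x * u x) - exp (-a x - 1)) μ := hau.neg.sub hexp
  rw [← integral_neg, ← integral_sub (f := fun x => -(a x * u x)) hau.neg hexp]
  by_cases hent : Integrable (fun x => u x * log (u x)) μ
  · exact integral_mono hlow hent fun x => neg_mul_sub_exp_le_mul_log (hu x) (a x)
  · rw [integral_undef hent]
    refine integral_nonpos fun x => ?_
    show -(a x * u x) - exp (-a x - 1) ≤ 0
    linarith [mul_nonneg (ha x) (hu x), exp_pos (-a x - 1)]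

theorem neg_integral_sq_mul_sub_le_integral_mul_log {u : ℝ → ℝ} (hu : ∀ x, 0 ≤ u x)
    (hu2 : Integrable (fun x => x ^ 2 * u x)) :
    -((∫ x, x ^ 2 * u x) / 2) - exp (-1) * √(2 * π) ≤ ∫ x, u x * log (u x) := by
  have hshift : (fun x : ℝ => exp (-(x ^ 2 / 2) - 1)) =
      fun x => exp (-1) * exp (-(1 / 2) * x ^ 2) :=
    funext fun x => by rw [← exp_add]; ring_nf
  have hgauss : ∫ x : ℝ, exp (-(x ^ 2 / 2) - 1) = exp (-1) * √(2 * π) := by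
    rw [hshift, integral_const_mul, integral_gaussian, one_div, div_inv_eq_mul, mul_comm π]
  have hmean : ∫ x : ℝ, x ^ 2 / 2 * u x = (∫ x, x ^ 2 * u x) / 2 := by
    simp_rw [div_mul_eq_mul_div, integral_div]
  have := neg_integral_sub_integral_exp_le_integral_mul_log hu (fun x => by positivity)
    (hu2.div_const 2 |>.congr (ae_of_all _ fun x => div_mul_eq_mul_div _ _ _ |>.symm))
    (hshift ▸ (integrable_exp_neg_mul_sq (by norm_num : (0 : ℝ) < 1 / 2)).const_mul _)
  rwa [hmean, hgauss] at this

namespace HasAllMoments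

variable {u : ℝ → ℝ}

theorem integrable_pow_mul (hmom : HasAllMoments u) (hu : Measurable u) (k : ℕ) :
    Integrable (fun x => x ^ k * u x) :=
  (hmom k).mono (by fun_prop) (ae_of_all _ fun x => by simp)

theorem integrable (hmom : HasAllMoments u) (hu : Measurable u) : Integrable u := by
  simpa using hmom.integrable_pow_mul hu 0

theorem integrable_eval_mul (hmom : HasAllMoments u) (hu : Measurable u) (p : Polynomial ℝ) :
    Integrable (fun x => p.eval x * u x) := by
  simp_rw [Polynomial.eval_eq_sum_range, Finset.sum_mul, mul_assoc]
  exact integrable_finsetSum _ fun i _ => (hmom.integrable_pow_mul hu i).const_mul _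

theorem integrable_eval_sub_mul_mul (hmom : HasAllMoments u) (hu : Measurable u)
    (p : Polynomial ℝ) :
    Integrable (fun z : ℝ × ℝ => p.eval (z.1 - z.2) * u z.1 * u z.2) (volume.prod volume) := by
  have hexpand : ∀ z : ℝ × ℝ, p.eval (z.1 - z.2) * u z.1 * u z.2 =
      ∑ i ∈ Finset.range (p.natDegree + 1), ∑ k ∈ Finset.range (i + 1),
        p.coeff i * (i.choose k) * (-1) ^ (i - k) *
          ((z.1 ^ k * u z.1) * (z.2 ^ (i - k) * u z.2)) := fun z => by
    simp_rw [Polynomial.eval_eq_sum_range, sub_eq_add_neg, add_pow, Finset.mul_sum,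
      Finset.sum_mul, neg_pow z.2]
    refine Finset.sum_congr rfl fun i _ => Finset.sum_congr rfl fun k _ => by ring
  simp_rw [hexpand]
  exact integrable_finsetSum _ fun i _ => integrable_finsetSum _ fun k _ =>
    ((hmom.integrable_pow_mul hu k).mul_prod (hmom.integrable_pow_mul hu (i - k))).const_mul _

theorem integrable_sub_sq_mul_mul (hmom : HasAllMoments u) (hu : Measurable u) :
    Integrable (fun z : ℝ × ℝ => (z.1 - z.2) ^ 2 * u z.1 * u z.2) (volume.prod volume) := by
  have := hmom.integrable_eval_sub_mul_mul hu (Polynomial.X ^ 2)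
  simp only [Polynomial.eval_pow, Polynomial.eval_X] at this
  exact this

theorem integral_integral_sub_sq_mul_mul (hmom : HasAllMoments u) (hu : Measurable u) :
    ∫ x, ∫ y, (x - y) ^ 2 * u x * u y =
      2 * ((∫ x, u x) * (∫ x, x ^ 2 * u x) - (∫ x, x * u x) ^ 2) := by
  have hm0 := hmom.integrable hu
  have hm1 : Integrable (fun x => x * u x) := by simpa using hmom.integrable_pow_mul hu 1
  have hm2 := hmom.integrable_pow_mul hu 2
  have h20 : Integrable (fun z : ℝ × ℝ => z.1 ^ 2 * u z.1 * u z.2) (volume.prod volume) :=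
    hm2.mul_prod hm0
  have h11 : Integrable (fun z : ℝ × ℝ => 2 * (z.1 * u z.1 * (z.2 * u z.2)))
      (volume.prod volume) := (hm1.mul_prod hm1).const_mul 2
  have h02 : Integrable (fun z : ℝ × ℝ => u z.1 * (z.2 ^ 2 * u z.2)) (volume.prod volume) :=
    hm0.mul_prod hm2
  have hdiff : Integrable (fun z : ℝ × ℝ => z.1 ^ 2 * u z.1 * u z.2 -
      2 * (z.1 * u z.1 * (z.2 * u z.2))) (volume.prod volume) := h20.sub h11
  have hexpand : (fun z : ℝ × ℝ => (z.1 - z.2) ^ 2 * u z.1 * u z.2) = fun z =>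
      (z.1 ^ 2 * u z.1 * u z.2 - 2 * (z.1 * u z.1 * (z.2 * u z.2))) +
        u z.1 * (z.2 ^ 2 * u z.2) := by
    funext z; ring
  rw [← integral_prod (fun z : ℝ × ℝ => (z.1 - z.2) ^ 2 * u z.1 * u z.2)
      (hmom.integrable_sub_sq_mul_mul hu), hexpand, integral_add hdiff h02,
    integral_sub h20 h11, integral_const_mul, integral_prod_mul (fun x => x ^ 2 * u x) u,
    integral_prod_mul (fun x => x * u x) (fun x => x * u x),
    integral_prod_mul u (fun x => x ^ 2 * u x)]
  ring

theorem mul_variance_le_integral_integral (hmom : HasAllMoments u) (hu : Measurable u)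
    (hpos : ∀ x, 0 ≤ u x) {F : ℝ → ℝ} (q : Polynomial ℝ) (hFq : ∀ x, F x = q.eval x)
    {c : ℝ} (hF : ∀ t, c / 2 * t ^ 2 ≤ F t) :
    c * ((∫ x, u x) * (∫ x, x ^ 2 * u x) - (∫ x, x * u x) ^ 2) ≤
      ∫ x, ∫ y, F (x - y) * u x * u y := by
  have hFint :
      Integrable (fun z : ℝ × ℝ => F (z.1 - z.2) * u z.1 * u z.2) (volume.prod volume) := by
    simpa only [hFq] using hmom.integrable_eval_sub_mul_mul hu q
  calc c * ((∫ x, u x) * (∫ x, x ^ 2 * u x) - (∫ x, x * u x) ^ 2)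
      = ∫ x, ∫ y, c / 2 * ((x - y) ^ 2 * u x * u y) := by
        simp_rw [integral_const_mul, hmom.integral_integral_sub_sq_mul_mul hu]
        ring
    _ ≤ ∫ x, ∫ y, F (x - y) * u x * u y := by
        rw [← integral_prod (fun z : ℝ × ℝ => c / 2 * ((z.1 - z.2) ^ 2 * u z.1 * u z.2))
          ((hmom.integrable_sub_sq_mul_mul hu).const_mul _), ← integral_prod _ hFint]
        refine integral_mono ((hmom.integrable_sub_sq_mul_mul hu).const_mul _) hFint fun z => ?_
        have := mul_le_mul_of_nonneg_right (hF (z.1 - z.2)) (mul_nonneg (hpos z.1) (hpos z.2))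
        simp only
        linarith

end HasAllMoments

theorem stmt10_general
    (V F : ℝ → ℝ) (p q : Polynomial ℝ)
    (hVp : ∀ x, V x = p.eval x) (hVeven : ∀ x, V (-x) = V x) (hV0 : V 0 = 0)
    (hVconv : ConvexOn ℝ Set.univ (deriv (deriv V)))
    (hFq : ∀ x, F x = q.eval x) (hFeven : ∀ x, F (-x) = F x) (hF0 : F 0 = 0)
    (hFconv : ConvexOn ℝ Set.univ (deriv (deriv F)))
    (ε : ℝ) (hε : 0 < ε) (hεle : ε ≤ 2 * (deriv (deriv V) 0 + deriv (deriv F) 0))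
    (u : ℝ → ℝ) (hu : IsProbDensity u) (hmom : HasAllMoments u)
    (hcentered : (∫ x : ℝ, x * u x) = 0) :
    -(ε / 4) - 4 * ε * Real.exp (-1) ≤ freeEnergy V F ε u := by
  obtain ⟨hmeas, hpos, hmass⟩ := hu
  have hm2 := hmom.integrable_pow_mul hmeas 2
  have hV := deriv_deriv_zero_mul_sq_le_of_eq_eval hVp hVeven hV0 hVconv
  have hF := deriv_deriv_zero_mul_sq_le_of_eq_eval hFq hFeven hF0 hFconv
  have hpot : deriv (deriv V) 0 / 2 * ∫ x, x ^ 2 * u x ≤ ∫ x, V x * u x := by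
    rw [← integral_const_mul]
    refine integral_mono (hm2.const_mul _)
      (by simpa only [hVp] using hmom.integrable_eval_mul hmeas p) fun x => ?_
    simpa only [mul_assoc] using mul_le_mul_of_nonneg_right (hV x) (hpos x)
  have hint := hmom.mul_variance_le_integral_integral hmeas hpos q hFq hF
  rw [hmass, hcentered] at hint
  have hent := mul_le_mul_of_nonneg_left (neg_integral_sq_mul_sub_le_integral_mul_log hpos hm2)
    (half_pos hε).le
  have hsqrt : √(2 * π) ≤ 8 := sqrt_le_iff.mpr ⟨by norm_num, by nlinarith [pi_le_four]⟩
  have hm2_nonneg : 0 ≤ ∫ x, x ^ 2 * u x :=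
    integral_nonneg fun x => mul_nonneg (sq_nonneg x) (hpos x)
  rw [freeEnergy]
  linarith [mul_nonneg (sub_nonneg.mpr hεle) hm2_nonneg,
    mul_nonneg (mul_nonneg hε.le (exp_pos (-1)).le) (sub_nonneg.mpr hsqrt)]

theorem stmt10
    (V F : ℝ → ℝ) (p q : Polynomial ℝ)
    (hVp : ∀ x, V x = p.eval x) (hVeven : ∀ x, V (-x) = V x) (hV0 : V 0 = 0)
    (hVconv : ConvexOn ℝ Set.univ (deriv (deriv V)))
    (hFq : ∀ x, F x = q.eval x) (hFeven : ∀ x, F (-x) = F x) (hF0 : F 0 = 0)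
    (hFconv : ConvexOn ℝ Set.univ (deriv (deriv F)))
    (hsyn : 0 < deriv (deriv V) 0 + deriv (deriv F) 0)
    (ε : ℝ) (hε : 0 < ε) (hεle : ε ≤ 2 * (deriv (deriv V) 0 + deriv (deriv F) 0))
    (u : ℝ → ℝ) (hu : IsProbDensity u) (hmom : HasAllMoments u)
    (hcentered : (∫ x : ℝ, x * u x) = 0) :
    -(ε / 4) - 4 * ε * Real.exp (-1) ≤ freeEnergy V F ε u :=
  stmt10_general V F p q hVp hVeven hV0 hVconv hFq hFeven hF0 hFconv ε hε hεle u hu hmom hcentered
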